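/- arXiv:2310.17965 — 4 statements merged into one kernel-verified Lean document; each statement's English description precedes it below -/
import Mathlib

section
/- Let G be the Klein bottle group ⟨a, b | a b a⁻¹ = b⁻¹⟩ and let ρ : G → SU(2) be a group homomorphism, viewing SU(2) as the unit quaternions. If ρ(b) ∉ {1, -1}, then ρ(a)² = -1 and ρ(a) anticommutes with the imaginary part of ρ(b); moreover in this case ρ(a²) = -1. -/
/-! The relation `a b a⁻¹ = b⁻¹` says that conjugation by `ρ(a)` inverts `ρ(b)`. On unit
quaternions inversion is `q ↦ q̄`, which fixes the real part and negates the imaginary part, so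
`ρ(a)` anticommutes with `Im ρ(b)`, which is nonzero because `ρ(b) ≠ ±1`. A quaternion
anticommuting with a nonzero pure quaternion is itself pure, and a pure unit quaternion squares
to `-1`. -/

open Metric

/-- The relator set of the Klein bottle group `⟨a, b | a b a⁻¹ = b⁻¹⟩`,
with `a = FreeGroup.of 0` and `b = FreeGroup.of 1`. -/
def kleinRels : Set (FreeGroup (Fin 2)) :=
  {FreeGroup.of 0 * FreeGroup.of 1 * (FreeGroup.of 0)⁻¹ * FreeGroup.of 1}

theorem kleinRels_map_mul_eq_inv_mul {G : Type*} [Group G] (ρ : PresentedGroup kleinRels →* G) :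
    ρ (.of 0) * ρ (.of 1) = (ρ (.of 1))⁻¹ * ρ (.of 0) := by
  have hrel : ρ (.of 0) * ρ (.of 1) * (ρ (.of 0))⁻¹ * ρ (.of 1) = 1 := by
    have h := congrArg ρ (PresentedGroup.one_of_mem (rels := kleinRels) rfl)
    simp only [map_mul, map_inv, map_one] at h
    exact h
  calc ρ (.of 0) * ρ (.of 1)
      = (ρ (.of 0) * ρ (.of 1) * (ρ (.of 0))⁻¹ * ρ (.of 1)) * (ρ (.of 1))⁻¹ * ρ (.of 0) := by
        group
    _ = (ρ (.of 1))⁻¹ * ρ (.of 0) := by rw [hrel, one_mul]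

namespace Quaternion

theorem normSq_coe_unitSphere (x : sphere (0 : ℍ) 1) : normSq (x : ℍ) = 1 := by
  rw [normSq_eq_norm_mul_self, norm_eq_of_mem_sphere, mul_one]

theorem coe_inv_unitSphere (x : sphere (0 : ℍ) 1) :
    ((x⁻¹ : sphere (0 : ℍ) 1) : ℍ) = star (x : ℍ) := by
  rw [unitSphere.coe_inv, inv_def, normSq_coe_unitSphere, inv_one, one_smul]

theorem mul_im_eq_neg_im_mul_of_mul_eq_star_mul {R : Type*} [CommRing R] {a b : ℍ[R]}
    (h : a * b = star b * a) : a * b.im = -(b.im * a) := by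
  have hstar : star b = b.re - b.im := by
    conv_lhs => rw [← re_add_im b]
    rw [star_add, star_coe, star_im, sub_eq_add_neg]
  calc a * b.im = a * b - a * b.re := by
        rw [← mul_sub, eq_sub_of_add_eq' (re_add_im b)]
    _ = star b * a - b.re * a := by rw [h, coe_commutes]
    _ = -(b.im * a) := by rw [hstar]; noncomm_ring

section LinearOrderedCommRing

variable {R : Type*} [CommRing R] [LinearOrder R] [IsStrictOrderedRing R]

theorem re_eq_zero_of_mul_eq_neg_mul {a v : ℍ[R]} (hv : v.re = 0) (hv0 : v ≠ 0)
    (h : a * v = -(v * a)) : a.re = 0 := by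
  -- for pure `v`, the imaginary part of `a * v + v * a` is `2 * a.re • v.im`
  have hI : a.re * v.imI = 0 := by
    have := congrArg (·.imI) h
    simp only [imI_mul, imI_neg, hv, mul_zero, zero_mul] at this
    linarith
  have hJ : a.re * v.imJ = 0 := by
    have := congrArg (·.imJ) h
    simp only [imJ_mul, imJ_neg, hv, mul_zero, zero_mul] at this
    linarith
  have hK : a.re * v.imK = 0 := by
    have := congrArg (·.imK) h
    simp only [imK_mul, imK_neg, hv, mul_zero, zero_mul] at this
    linarith
  by_contra ha
  refine hv0 (ext _ _ hv ?_ ?_ ?_)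
  exacts [(mul_eq_zero.1 hI).resolve_left ha, (mul_eq_zero.1 hJ).resolve_left ha,
    (mul_eq_zero.1 hK).resolve_left ha]

theorem im_ne_zero_of_normSq_eq_one {b : ℍ[R]} (hb : normSq b = 1) (h1 : b ≠ 1) (h2 : b ≠ -1) :
    b.im ≠ 0 := by
  intro him
  obtain ⟨r, rfl⟩ : ∃ r : R, b = r := ⟨b.re, by rw [← re_add_im b, him, add_zero, re_coe]⟩
  rw [normSq_coe, sq, mul_self_eq_one_iff] at hb
  rcases hb with rfl | rfl
  exacts [h1 coe_one, h2 (by rw [coe_neg, coe_one])]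

end LinearOrderedCommRing

end Quaternion

/-- If `ρ` is a homomorphism from the Klein bottle group to the unit quaternions
with `ρ(b) ∉ {1, -1}`, then `ρ(a)² = -1`, `ρ(a)` anticommutes with the imaginary
part of `ρ(b)`, and `ρ(a²) = -1`. -/
theorem stmt6 (ρ : PresentedGroup kleinRels →* sphere (0 : Quaternion ℝ) 1)
    (hb : (ρ (PresentedGroup.of 1) : Quaternion ℝ) ≠ 1 ∧
      (ρ (PresentedGroup.of 1) : Quaternion ℝ) ≠ -1) :
    ((ρ (PresentedGroup.of 0) : Quaternion ℝ)) ^ 2 = -1 ∧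
    ((ρ (PresentedGroup.of 0) : Quaternion ℝ)) *
        (ρ (PresentedGroup.of 1) : Quaternion ℝ).im =
      -((ρ (PresentedGroup.of 1) : Quaternion ℝ).im *
        (ρ (PresentedGroup.of 0) : Quaternion ℝ)) ∧
    (ρ ((PresentedGroup.of 0) ^ 2) : Quaternion ℝ) = -1 := by
  have hconj := congrArg Subtype.val (kleinRels_map_mul_eq_inv_mul ρ)
  rw [unitSphere.coe_mul, unitSphere.coe_mul, Quaternion.coe_inv_unitSphere] at hconj
  have hanti := Quaternion.mul_im_eq_neg_im_mul_of_mul_eq_star_mul hconj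
  have hre : (ρ (.of 0) : Quaternion ℝ).re = 0 :=
    Quaternion.re_eq_zero_of_mul_eq_neg_mul (Quaternion.re_im _)
      (Quaternion.im_ne_zero_of_normSq_eq_one (Quaternion.normSq_coe_unitSphere _) hb.1 hb.2)
      hanti
  have hsq : (ρ (.of 0) : Quaternion ℝ) ^ 2 = -1 := by
    rw [Quaternion.sq_eq_neg_normSq.2 hre, Quaternion.normSq_coe_unitSphere, Quaternion.coe_one]
  exact ⟨hsq, hanti, by rw [map_pow, unitSphere.coe_pow, hsq]⟩
end

section
/- If two pairs of diagonal SU(2) matrices are simultaneously conjugate, their angle coordinates agree up to a simultaneous sign: if g ∈ SU(2) satisfies g·diag(e^{iα}, e^{-iα})·g⁻¹ = diag(e^{iα'}, e^{-iα'}) and g·diag(e^{iβ}, e^{-iβ})·g⁻¹ = diag(e^{iβ'}, e^{-iβ'}), and e^{iα} ≠ ±1 or e^{iβ} ≠ ±1, then either (e^{iα'}, e^{iβ'}) = (e^{iα}, e^{iβ}) or (e^{iα'}, e^{iβ'}) = (e^{-iα}, e^{-iβ}). -/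
open Matrix Complex

/-- If two pairs of diagonal SU(2) matrices are simultaneously conjugate by an
element of SU(2), then their angle coordinates agree up to a simultaneous sign,
provided at least one of the original diagonal matrices is not `±1`. -/
theorem stmt11 (g : Matrix (Fin 2) (Fin 2) ℂ)
    (hg : g ∈ Matrix.specialUnitaryGroup (Fin 2) ℂ)
    (α β α' β' : ℝ)
    (hα : g * Matrix.diagonal ![Complex.exp (α * Complex.I),
        Complex.exp (-α * Complex.I)] * g⁻¹ =
      Matrix.diagonal ![Complex.exp (α' * Complex.I), Complex.exp (-α' * Complex.I)])
    (hβ : g * Matrix.diagonal ![Complex.exp (β * Complex.I),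
        Complex.exp (-β * Complex.I)] * g⁻¹ =
      Matrix.diagonal ![Complex.exp (β' * Complex.I), Complex.exp (-β' * Complex.I)])
    (hcentral : (Complex.exp (α * Complex.I) ≠ 1 ∧ Complex.exp (α * Complex.I) ≠ -1) ∨
      (Complex.exp (β * Complex.I) ≠ 1 ∧ Complex.exp (β * Complex.I) ≠ -1)) :
    (Complex.exp (α' * Complex.I) = Complex.exp (α * Complex.I) ∧
      Complex.exp (β' * Complex.I) = Complex.exp (β * Complex.I)) ∨
    (Complex.exp (α' * Complex.I) = Complex.exp (-α * Complex.I) ∧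
      Complex.exp (β' * Complex.I) = Complex.exp (-β * Complex.I)) := by
  have hdet : g.det = 1 := (Matrix.mem_specialUnitaryGroup_iff.mp hg).2
  have hinv : g⁻¹ * g = 1 := Matrix.nonsing_inv_mul g (by simp [hdet])
  have key : ∀ (γ γ' : ℝ), g * Matrix.diagonal ![Complex.exp (γ * Complex.I),
        Complex.exp (-γ * Complex.I)] * g⁻¹ =
      Matrix.diagonal ![Complex.exp (γ' * Complex.I), Complex.exp (-γ' * Complex.I)] →
      g * Matrix.diagonal ![Complex.exp (γ * Complex.I), Complex.exp (-γ * Complex.I)] =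
      Matrix.diagonal ![Complex.exp (γ' * Complex.I), Complex.exp (-γ' * Complex.I)] * g := by
    intro γ γ' h
    calc g * Matrix.diagonal ![Complex.exp (γ * Complex.I), Complex.exp (-γ * Complex.I)]
        = g * Matrix.diagonal ![Complex.exp (γ * Complex.I),
            Complex.exp (-γ * Complex.I)] * g⁻¹ * g := by
          rw [mul_assoc, hinv, mul_one]
      _ = _ := by rw [h]
  have hα2 := key α α' hα
  have hβ2 := key β β' hβ
  by_cases ha : g 0 0 = 0
  · -- then b * c = -1, so b ≠ 0
    have hd : g 0 0 * g 1 1 - g 0 1 * g 1 0 = 1 := by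
      rw [← Matrix.det_fin_two]; exact hdet
    have hb : g 0 1 ≠ 0 := by
      intro hb; rw [ha, hb] at hd; simp at hd
    right
    constructor
    · have e := congrFun (congrFun hα2 0) 1
      simp [Matrix.mul_diagonal, Matrix.diagonal_mul] at e
      simpa using mul_right_cancel₀ hb (e.symm.trans (mul_comm _ _))
    · have e := congrFun (congrFun hβ2 0) 1
      simp [Matrix.mul_diagonal, Matrix.diagonal_mul] at e
      simpa using mul_right_cancel₀ hb (e.symm.trans (mul_comm _ _))
  · left
    constructor
    · have e := congrFun (congrFun hα2 0) 0
      simp [Matrix.mul_diagonal, Matrix.diagonal_mul] at e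
      simpa using mul_right_cancel₀ ha (e.symm.trans (mul_comm _ _))
    · have e := congrFun (congrFun hβ2 0) 0
      simp [Matrix.mul_diagonal, Matrix.diagonal_mul] at e
      simpa using mul_right_cancel₀ ha (e.symm.trans (mul_comm _ _))
end

section
/- Let H be a subgroup of SO(3) of order 2, and let π : SU(2) → SO(3) be the standard double cover. Then the preimage π⁻¹(H) is a cyclic subgroup of SU(2) of order 4. -/
/-!
Since `π` is surjective, `π⁻¹(H)` is an extension of `H` by `ker π = {±1}`, so it has order 4.
Lift the nontrivial element of `H` to some `g`. Then `g² ∈ ker π`, and `g² ≠ 1` because the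
only square roots of `1` among the unit quaternions are `±1`, which lie in the kernel. Hence
`g² = -1`, `g` has order 4, and it generates `π⁻¹(H)`.
-/

open Metric

section

variable {G K : Type*} [Group G] [Group K]

theorem Subgroup.card_comap_of_surjective {f : G →* K} (hf : Function.Surjective f)
    (H : Subgroup K) : Nat.card (H.comap f) = Nat.card f.ker * Nat.card H := by
  have hker : (f.subgroupComap H).ker = f.ker.subgroupOf (H.comap f) := by
    ext x
    rw [MonoidHom.mem_ker, Subgroup.mem_subgroupOf, MonoidHom.mem_ker]
    exact Subtype.ext_iff
  rw [← (f.subgroupComap H).ker.card_mul_index, Subgroup.index_ker,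
    MonoidHom.range_eq_top.2 (f.subgroupComap_surjective_of_surjective H hf), Subgroup.card_top,
    hker, Nat.card_congr (Subgroup.subgroupOfEquivOfLe (f.ker_le_comap H)).toEquiv]

theorem MonoidHom.card_ker_eq_two (f : G →* K) {a b : G} (hab : a ≠ b)
    (hker : (f.ker : Set G) = {a, b}) : Nat.card f.ker = 2 := by
  rw [← SetLike.coe_sort_coe, Nat.card_coe_set_eq, hker, Set.ncard_pair hab]

theorem MonoidHom.orderOf_eq_four_of_orderOf_map_eq_two {π : G →* K}
    (hker : Nat.card π.ker = 2) (hinv : ∀ g, g ^ 2 = 1 → π g = 1) {g : G}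
    (hg : orderOf (π g) = 2) : orderOf g = 4 := by
  have hsq_ker : g ^ 2 ∈ π.ker := by rw [MonoidHom.mem_ker, map_pow, ← hg, pow_orderOf_eq_one]
  refine orderOf_eq_prime_pow (p := 2) (n := 1) (fun h => ?_) ?_
  · simp [hinv g h] at hg
  · have h := pow_card_eq_one' (x := (⟨g ^ 2, hsq_ker⟩ : π.ker))
    rw [hker] at h
    simpa [← pow_mul] using congrArg Subtype.val h

theorem isCyclic_comap_and_card_comap_eq_four {π : G →* K} (hπ : Function.Surjective π)
    (hker : Nat.card π.ker = 2) (hinv : ∀ g, g ^ 2 = 1 → π g = 1)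
    (H : Subgroup K) (hH : Nat.card H = 2) :
    IsCyclic (H.comap π) ∧ Nat.card (H.comap π) = 4 := by
  have hcard : Nat.card (H.comap π) = 4 := by
    rw [Subgroup.card_comap_of_surjective hπ, hker, hH]
  have : Finite (H.comap π) := Nat.finite_of_card_ne_zero (by rw [hcard]; norm_num)
  obtain ⟨k, hk1⟩ := ((Nat.card_eq_two_iff' (1 : H)).1 hH).exists
  obtain ⟨g, hg⟩ := hπ k
  have hk : orderOf (k : K) = 2 := by
    refine orderOf_eq_prime ?_ (by simpa using hk1)
    simpa [hH] using congrArg Subtype.val (pow_card_eq_one' (x := k))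
  have hgH : g ∈ H.comap π := by simp [hg]
  refine ⟨isCyclic_of_orderOf_eq_card (⟨g, hgH⟩ : H.comap π) ?_, hcard⟩
  rw [Subgroup.orderOf_mk, π.orderOf_eq_four_of_orderOf_map_eq_two hker hinv (hg ▸ hk), hcard]

end

/-- Let `π : SU(2) → K` be a surjective homomorphism from the unit quaternions whose
kernel is exactly `{1, -1}` (such as the standard double cover `SU(2) → SO(3)`),
and let `H` be a subgroup of `K` of order 2.  Then the preimage `π⁻¹(H)` is a
cyclic subgroup of SU(2) of order 4. -/
theorem stmt13 (K : Type*) [Group K]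
    (π : (sphere (0 : Quaternion ℝ) 1) →* K)
    (hsurj : Function.Surjective π)
    (hker : ∀ g, π g = 1 ↔ ((g : Quaternion ℝ) = 1 ∨ (g : Quaternion ℝ) = -1))
    (H : Subgroup K) (hH : Nat.card H = 2) :
    IsCyclic (H.comap π) ∧ Nat.card (H.comap π) = 4 := by
  have hker_eq : (π.ker : Set (sphere (0 : Quaternion ℝ) 1)) = {1, -1} := by
    ext g
    simpa only [SetLike.mem_coe, MonoidHom.mem_ker, Set.mem_insert_iff, Set.mem_singleton_iff,
      Subtype.ext_iff, Metric.unitSphere.coe_one, coe_neg_sphere] using hker g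
  have hne : (1 : sphere (0 : Quaternion ℝ) 1) ≠ -1 := fun h => by
    have hre := congrArg (fun q : sphere (0 : Quaternion ℝ) 1 => (q : Quaternion ℝ).re) h
    norm_num [Quaternion.re_one] at hre
  have hinv : ∀ g : sphere (0 : Quaternion ℝ) 1, g ^ 2 = 1 → π g = 1 := fun g hg =>
    (hker g).2 (sq_eq_one_iff.1 (by exact_mod_cast congrArg Subtype.val hg))
  exact isCyclic_comap_and_card_comap_eq_four hsurj (π.card_ker_eq_two hne hker_eq) hinv H hH
end

section
/- Let p be a prime and n₁ ≥ 1, n₂ ≥ 0 integers. Let A = ((ℤ/pℤ) × (ℤ/pℤ)^{n₁-1} × ℤ) × ((ℤ/pℤ)^{n₂} × ℤ), and let f : ℤ² → A be the homomorphism sending the first standard generator to ((1,0,0),(0,1)) and the second to ((0,0,p),(0,0)). Then f is injective and the cokernel A / f(ℤ²) is isomorphic to (ℤ/pℤ)^{n₁+n₂+1}. -/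
/-- Let `p` be a prime, `n₁ ≥ 1`, `n₂ ≥ 0`, and let
`A = ((ℤ/p) × (ℤ/p)^(n₁-1) × ℤ) × ((ℤ/p)^(n₂) × ℤ)`.  If `f : ℤ² → A` is the
homomorphism sending the first standard generator to `((1,0,0),(0,1))` and the
second to `((0,0,p),(0,0))`, then `f` is injective and `A / f(ℤ²)` is isomorphic to
`(ℤ/p)^(n₁+n₂+1)`. -/
theorem stmt19 (p : ℕ) (hp : p.Prime) (n₁ n₂ : ℕ) (h₁ : 1 ≤ n₁)
    (f : ℤ × ℤ →+ (ZMod p × (Fin (n₁ - 1) → ZMod p) × ℤ) × ((Fin n₂ → ZMod p) × ℤ))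
    (hf1 : f (1, 0) = ((1, 0, 0), (0, 1)))
    (hf2 : f (0, 1) = ((0, 0, (p : ℤ)), (0, 0))) :
    Function.Injective f ∧
      Nonempty ((((ZMod p × (Fin (n₁ - 1) → ZMod p) × ℤ) × ((Fin n₂ → ZMod p) × ℤ)) ⧸
          f.range) ≃+ (Fin (n₁ + n₂ + 1) → ZMod p)) := by
  haveI : Fact p.Prime := ⟨hp⟩
  have hpne : (p : ℤ) ≠ 0 := by exact_mod_cast hp.ne_zero
  -- formula for f
  have hf : ∀ a b : ℤ, f (a, b) = (((a : ZMod p), 0, b * p), (0, a)) := by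
    intro a b
    have h : (a, b) = a • ((1 : ℤ), (0 : ℤ)) + b • ((0 : ℤ), (1 : ℤ)) := by
      simp [Prod.ext_iff]
    rw [h, map_add, map_zsmul, map_zsmul, hf1, hf2]
    simp [Prod.ext_iff, mul_comm]
  constructor
  · rw [injective_iff_map_eq_zero]
    rintro ⟨a, b⟩ hab
    rw [hf] at hab
    simp only [Prod.ext_iff, Prod.mk.injEq] at hab
    obtain ⟨⟨-, -, h3⟩, -, h4⟩ := hab
    have hb : b = 0 := by
      rcases mul_eq_zero.1 h3 with h | h
      · exact h
      · exact absurd h hpne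
    simp [Prod.ext_iff, h4, hb]
  · -- define g : A →+ B
    let g : (ZMod p × (Fin (n₁ - 1) → ZMod p) × ℤ) × ((Fin n₂ → ZMod p) × ℤ) →+
        (ZMod p × (Fin (n₁ - 1) → ZMod p) × ZMod p × (Fin n₂ → ZMod p)) :=
      { toFun := fun a => (a.1.1 - (a.2.2 : ZMod p), a.1.2.1, ((a.1.2.2 : ℤ) : ZMod p), a.2.1)
        map_zero' := by simp
        map_add' := by
          rintro ⟨⟨a, b, c⟩, d, e⟩ ⟨⟨a', b', c'⟩, d', e'⟩
          simp only [Prod.mk_add_mk, Prod.mk.injEq]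
          refine ⟨by push_cast; ring, trivial, by push_cast; ring, trivial⟩ }
    have hgsurj : Function.Surjective g := by
      rintro ⟨x, v1, z, v2⟩
      refine ⟨((x, v1, (ZMod.cast z : ℤ)), (v2, 0)), ?_⟩
      simp [g, ZMod.intCast_zmod_cast]
    have hker : f.range = g.ker := by
      ext x
      simp only [AddMonoidHom.mem_range, AddMonoidHom.mem_ker]
      constructor
      · rintro ⟨⟨a, b⟩, rfl⟩
        rw [hf]
        simp [g, Prod.ext_iff]
      · intro hx
        obtain ⟨⟨x1, v1, m⟩, v2, k⟩ := x
        simp [g, Prod.ext_iff] at hx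
        obtain ⟨h1, h2, h3, h4⟩ := hx
        obtain ⟨b, hb⟩ := (ZMod.intCast_zmod_eq_zero_iff_dvd m p).1 h3
        refine ⟨(k, b), ?_⟩
        rw [hf]
        have hx1 : x1 = (k : ZMod p) := eq_of_sub_eq_zero h1
        simp [Prod.ext_iff, hx1, h2, h4, hb, mul_comm]
    rw [hker]
    have e1 := QuotientAddGroup.quotientKerEquivOfSurjective g hgsurj
    -- B ≃+ (Fin (n₁+n₂+1) → ZMod p) via linear algebra
    have e2 : Nonempty ((ZMod p × (Fin (n₁ - 1) → ZMod p) × ZMod p × (Fin n₂ → ZMod p))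
        ≃ₗ[ZMod p] (Fin (n₁ + n₂ + 1) → ZMod p)) := by
      apply FiniteDimensional.nonempty_linearEquiv_of_finrank_eq
      simp [Module.finrank_prod, Module.finrank_pi]
      omega
    obtain ⟨e2⟩ := e2
    exact ⟨e1.trans e2.toAddEquiv⟩
end
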